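/- Let (E,T,S,e) be a conditional expectation preserving system. Then (E,T,S,e) is conditionally weakly mixing (i.e., (1/n) Σ_{k=0}^{n−1} |T((S^k Pe)·Qe) − TPe·TQe| → 0 in order for all band projections P, Q on E) if and only if (1/n) Σ_{k=0}^{n−1} |T((S^k f)·g) − Tf·Tg| → 0 in order as n → ∞ for all f, g ∈ E_e. -/

import Mathlib

open Finset

/- `E` is a Riesz space (real vector lattice). -/
variable {E : Type*} [AddCommGroup E] [Lattice E]
  [CovariantClass E E (· + ·) (· ≤ ·)] [Module ℝ E] [PosSMulMono ℝ E]

/-- A sequence `u` in `E` order converges to `l` if there is a sequence `p` decreasing to `0`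
with `|u n - l| ≤ p n` for all `n`. -/
def OrderConv (u : ℕ → E) (l : E) : Prop :=
  ∃ p : ℕ → E, Antitone p ∧ IsGLB (Set.range p) 0 ∧ ∀ n, |u n - l| ≤ p n

/-- `l` is the greatest lower bound of `A` relative to the subset `F`. -/
def IsGLBIn (F A : Set E) (l : E) : Prop :=
  (∀ a ∈ A, l ≤ a) ∧ ∀ b ∈ F, (∀ a ∈ A, b ≤ a) → b ≤ l

/-- `F` is Dedekind complete (in its induced order): every nonempty subset of `F`
bounded above in `F` has a supremum in `F`. -/
def DedekindCompleteIn (F : Set E) : Prop :=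
  ∀ A : Set E, A ⊆ F → A.Nonempty → (∃ b ∈ F, ∀ a ∈ A, a ≤ b) →
    ∃ s ∈ F, (∀ a ∈ A, a ≤ s) ∧ ∀ b ∈ F, (∀ a ∈ A, a ≤ b) → s ≤ b

/-- `u` is a weak order unit of (the Riesz subspace) `F`:  `u > 0` and the band generated by
`u` is everything, equivalently no nonzero positive element of `F` is disjoint from `u`. -/
def IsWeakOrderUnitIn (F : Set E) (u : E) : Prop :=
  0 < u ∧ ∀ f ∈ F, 0 ≤ f → f ⊓ u = 0 → f = 0

/-- Band projections on a Riesz space: the linear idempotents `P` with `0 ≤ P ≤ I`. -/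
def IsBandProjection (P : E →ₗ[ℝ] E) : Prop :=
  (∀ f, P (P f) = P f) ∧ ∀ f, 0 ≤ f → 0 ≤ P f ∧ P f ≤ f

/-- `L` (restricted to `F`) is a conditional expectation operator on `F`: a positive
order continuous linear projection whose range is a Dedekind complete Riesz subspace and
which maps weak order units to weak order units. -/
def IsCondExpOn (F : Set E) (L : E → E) : Prop :=
  (∀ f ∈ F, L f ∈ F) ∧
  (∀ f ∈ F, ∀ g ∈ F, L (f + g) = L f + L g) ∧
  (∀ r : ℝ, ∀ f ∈ F, L (r • f) = r • L f) ∧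
  (∀ f ∈ F, 0 ≤ f → 0 ≤ L f) ∧
  (∀ A : Set E, A ⊆ F → A.Nonempty → DirectedOn (· ≥ ·) A → IsGLBIn F A 0 →
      IsGLBIn F (L '' A) 0) ∧
  (∀ f ∈ F, L (L f) = L f) ∧
  (∀ f ∈ L '' F, ∀ g ∈ L '' F, f ⊔ g ∈ L '' F) ∧
  DedekindCompleteIn (L '' F) ∧
  (∀ u ∈ F, IsWeakOrderUnitIn F u → IsWeakOrderUnitIn F (L u))

/-- Order continuity of a positive operator: downward directed sets with infimum `0`
are mapped to sets with infimum `0`. -/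
def OrderContinuousOp (S : E →ₗ[ℝ] E) : Prop :=
  ∀ A : Set E, A.Nonempty → DirectedOn (· ≥ ·) A → IsGLB A 0 → IsGLB (S '' A) 0

/-- Riesz homomorphism: a linear map preserving the lattice operations. -/
def IsRieszHom (S : E →ₗ[ℝ] E) : Prop := ∀ f g, S (f ⊔ g) = S f ⊔ S g

/-- `(E,T,S,e)` is a conditional expectation preserving system: `E` is a Dedekind complete
Riesz space with weak order unit `e`, `T` a conditional expectation operator on `E` with
`Te = e`, and `S` an order continuous Riesz homomorphism with `Se = e` and `TSPe = TPe`
for every band projection `P` on `E`. -/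
def IsCEPS (T S : E →ₗ[ℝ] E) (e : E) : Prop :=
  DedekindCompleteIn (Set.univ : Set E) ∧
  IsWeakOrderUnitIn (Set.univ : Set E) e ∧
  IsCondExpOn Set.univ T ∧ T e = e ∧
  IsRieszHom S ∧ OrderContinuousOp S ∧ S e = e ∧
  ∀ P : E →ₗ[ℝ] E, IsBandProjection P → T (S (P e)) = T (P e)

/-- The Cesàro means `S_n f = (1/n) ∑_{k=0}^{n-1} S^k f`. -/
noncomputable def ces (S : E →ₗ[ℝ] E) (f : E) (n : ℕ) : E :=
  (n : ℝ)⁻¹ • ∑ k ∈ Finset.range n, (S ^ k) f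

/-- The principal ideal `E_e` generated by `e`. -/
def idealE (e : E) : Set E := {f : E | ∃ k : ℝ, 0 ≤ k ∧ |f| ≤ k • e}

/-- The system `(E,T,S,e)` is ergodic if `L_S f ∈ R(T)` for every `S`-invariant `f`
(where `L_S f` is any order limit of the Cesàro means of `f`). -/
def IsErgodic (T S : E →ₗ[ℝ] E) (e : E) : Prop :=
  ∀ f l : E, S f = f → OrderConv (ces S f) l → l ∈ Set.range T

/-- `m` is the `f`-algebra multiplication on the principal ideal `E_e`:  commutative,
bilinear, positive, with unit `e`, determined on components by `Pe·Qe = PQe` for band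
projections `P, Q`, and order continuous (so extendable from components by order limits). -/
def IsFAlgMulOn (e : E) (m : E → E → E) : Prop :=
  (∀ f ∈ idealE e, ∀ g ∈ idealE e, m f g ∈ idealE e) ∧
  (∀ f ∈ idealE e, ∀ g ∈ idealE e, m f g = m g f) ∧
  (∀ f ∈ idealE e, ∀ g ∈ idealE e, ∀ h ∈ idealE e, m (f + g) h = m f h + m g h) ∧
  (∀ r : ℝ, ∀ f ∈ idealE e, ∀ g ∈ idealE e, m (r • f) g = r • m f g) ∧
  (∀ f ∈ idealE e, ∀ g ∈ idealE e, 0 ≤ f → 0 ≤ g → 0 ≤ m f g) ∧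
  (∀ f ∈ idealE e, m e f = f) ∧
  (∀ P Q : E →ₗ[ℝ] E, IsBandProjection P → IsBandProjection Q → m (P e) (Q e) = P (Q e)) ∧
  (∀ g ∈ idealE e, 0 ≤ g → ∀ (u : ℕ → E) (l : E), (∀ n, u n ∈ idealE e) → l ∈ idealE e →
      OrderConv u l → OrderConv (fun n => m (u n) g) (m l g))

/-!
Components are dense in `E_e` (Freudenthal): for `0 ≤ f ≤ k • e` let `Q_t` be the band projection
onto `(f - t • e)⁺`. Then `Q (f - t • e) ≤ (f - t • e)⁺ = Q_t (f - t • e)` for every band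
projection `Q`, which pins `Q_{iε} f - Q_{(i+1)ε} f` between `iε` and `(i+1)ε` times
`Q_{iε} e - Q_{(i+1)ε} e`; summing, `∑ iε • (Q_{iε} e - Q_{(i+1)ε} e)` is within `ε • e` of `f`.

The defect `k ↦ T((S^k f)·g) - Tf·Tg` is bilinear in `(f, g)`, and the sequences whose Cesàro
means of absolute values order converge to `0` form a subspace, so mixing passes from components
to their span. Since `T`, `S^k` and the multiplication are bounded for the order-unit norm, moving
`f, g` by `δ • e` moves the defect by `O(δ) • e`; and in a Dedekind complete space, which is
Archimedean, a sequence that is order null up to `ε • e` for every `ε > 0` is order null.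
-/

section LatticeOrderedGroup

variable {V : Type*} [AddCommGroup V] [Lattice V] [AddLeftMono V]

theorem abs_sub_le_abs_add_abs (a b : V) : |a - b| ≤ |a| + |b| := by
  simpa [sub_eq_add_neg] using abs_add_le a (-b)

theorem posPart_le_abs (a : V) : a⁺ ≤ |a| :=
  posPart_add_negPart a ▸ le_add_of_nonneg_right (negPart_nonneg a)

theorem negPart_le_abs (a : V) : a⁻ ≤ |a| :=
  posPart_add_negPart a ▸ le_add_of_nonneg_left (posPart_nonneg a)

theorem inf_add_le_inf_add_inf {a b c : V} (ha : 0 ≤ a) (hb : 0 ≤ b) (hc : 0 ≤ c) :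
    (a + b) ⊓ c ≤ a ⊓ c + b ⊓ c := by
  rw [add_inf, inf_add, inf_add]
  exact le_inf (le_inf inf_le_left (inf_le_right.trans (le_add_of_nonneg_right hb)))
    (le_inf (inf_le_right.trans (le_add_of_nonneg_left ha))
      (inf_le_right.trans (le_add_of_nonneg_left hc)))

theorem exists_isLUB_of_dedekindCompleteIn {α : Type*} [Lattice α]
    (hD : DedekindCompleteIn (Set.univ : Set α)) {A : Set α} (hne : A.Nonempty)
    (hbdd : BddAbove A) : ∃ s, IsLUB A s := by
  obtain ⟨b, hb⟩ := hbdd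
  obtain ⟨s, -, hub, hlub⟩ := hD A (Set.subset_univ A) hne ⟨b, trivial, fun a ha => hb ha⟩
  exact ⟨s, fun a ha => hub a ha, fun c hc => hlub c trivial fun a ha => hc ha⟩

theorem nonpos_of_forall_nsmul_le {G : Type*} [AddCommGroup G] [Lattice G] [AddLeftMono G]
    (hD : DedekindCompleteIn (Set.univ : Set G)) {b e : G} (h : ∀ n : ℕ, n • b ≤ e) : b ≤ 0 := by
  obtain ⟨s, hs⟩ := exists_isLUB_of_dedekindCompleteIn hD (Set.range_nonempty fun n : ℕ => n • b)
    ⟨e, Set.forall_mem_range.2 h⟩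
  have : s ≤ s - b := hs.2 <| Set.forall_mem_range.2 fun n =>
    le_sub_iff_add_le.2 <| succ_nsmul b n ▸ hs.1 ⟨n + 1, rfl⟩
  simpa using this

end LatticeOrderedGroup

section RieszSpace

variable {V : Type*} [AddCommGroup V] [Lattice V] [Module ℝ V] [PosSMulMono ℝ V]

theorem smul_sup_of_nonneg {r : ℝ} (hr : 0 ≤ r) (a b : V) : r • (a ⊔ b) = r • a ⊔ r • b := by
  rcases hr.eq_or_lt with rfl | hr
  · simp
  · exact (OrderIso.smulRight hr).map_sup a b

theorem smul_inf_of_nonneg {r : ℝ} (hr : 0 ≤ r) (a b : V) : r • (a ⊓ b) = r • a ⊓ r • b := by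
  rcases hr.eq_or_lt with rfl | hr
  · simp
  · exact (OrderIso.smulRight hr).map_inf a b

theorem abs_real_smul (r : ℝ) (a : V) : |r • a| = |r| • |a| := by
  rcases le_total 0 r with hr | hr
  · rw [abs_of_nonneg hr, abs, abs, smul_sup_of_nonneg hr, smul_neg]
  · rw [abs_of_nonpos hr, ← abs_neg, ← neg_smul, abs, abs, smul_sup_of_nonneg (neg_nonneg.2 hr),
      smul_neg, sup_comm]

variable [AddLeftMono V]

theorem smul_le_smul_of_nonneg_right' {r s : ℝ} (h : r ≤ s) {a : V} (ha : 0 ≤ a) :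
    r • a ≤ s • a := by
  rw [← sub_nonneg, ← sub_smul]
  exact smul_nonneg (sub_nonneg.2 h) ha

theorem isGLB_range_inv_succ_smul (hD : DedekindCompleteIn (Set.univ : Set V)) {e : V}
    (he : 0 ≤ e) : IsGLB (Set.range fun j : ℕ => ((j : ℝ) + 1)⁻¹ • e) 0 := by
  refine ⟨Set.forall_mem_range.2 fun j => smul_nonneg (by positivity) he, fun b hb => ?_⟩
  refine nonpos_of_forall_nsmul_le hD (e := e) fun n => ?_
  cases n with
  | zero => simpa using he
  | succ j =>
    have hj : (0 : ℝ) < j + 1 := by positivity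
    have := smul_le_smul_of_nonneg_left (hb ⟨j, rfl⟩) hj.le
    rwa [smul_inv_smul₀ hj.ne', ← Nat.cast_succ, Nat.cast_smul_eq_nsmul] at this

end RieszSpace

section PositiveExtension

variable {V W : Type*} [AddCommGroup V] [Lattice V] [AddLeftMono V] [AddCommGroup W]

theorem map_posPart_sub_map_negPart {φ : V → W}
    (hadd : ∀ a b, 0 ≤ a → 0 ≤ b → φ (a + b) = φ a + φ b) {a b : V} (ha : 0 ≤ a) (hb : 0 ≤ b) :
    φ (a - b)⁺ - φ (a - b)⁻ = φ a - φ b := by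
  have h : a + (a - b)⁻ = (a - b)⁺ + b := by
    rw [← sub_eq_sub_iff_add_eq_add, posPart_sub_negPart]
  have := congrArg φ h
  rw [hadd _ _ ha (negPart_nonneg _), hadd _ _ (posPart_nonneg _) hb] at this
  rw [sub_eq_sub_iff_add_eq_add, ← this, add_comm]

variable [Module ℝ V] [Module ℝ W] [PosSMulMono ℝ V]

def LinearMap.extendOfNonneg (φ : V → W) (hadd : ∀ a b, 0 ≤ a → 0 ≤ b → φ (a + b) = φ a + φ b)
    (hsmul : ∀ (r : ℝ) a, 0 ≤ r → 0 ≤ a → φ (r • a) = r • φ a) : V →ₗ[ℝ] W where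
  toFun f := φ f⁺ - φ f⁻
  map_add' f g := by
    have hfg : f + g = (f⁺ + g⁺) - (f⁻ + g⁻) := by
      rw [add_sub_add_comm, posPart_sub_negPart, posPart_sub_negPart]
    rw [hfg, map_posPart_sub_map_negPart hadd (by positivity) (by positivity),
      hadd _ _ (posPart_nonneg f) (posPart_nonneg g),
      hadd _ _ (negPart_nonneg f) (negPart_nonneg g)]
    abel
  map_smul' r f := by
    rcases le_total 0 r with hr | hr
    · have hrf : r • f = r • f⁺ - r • f⁻ := by rw [← smul_sub, posPart_sub_negPart]
      rw [RingHom.id_apply, hrf, map_posPart_sub_map_negPart hadd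
        (smul_nonneg hr (posPart_nonneg f)) (smul_nonneg hr (negPart_nonneg f)),
        hsmul _ _ hr (posPart_nonneg f),
        hsmul _ _ hr (negPart_nonneg f), smul_sub]
    · have hr' : 0 ≤ -r := neg_nonneg.2 hr
      have hrf : r • f = (-r) • f⁻ - (-r) • f⁺ := by
        rw [← smul_sub, neg_smul, ← smul_neg, neg_sub, posPart_sub_negPart]
      rw [RingHom.id_apply, hrf, map_posPart_sub_map_negPart hadd
        (smul_nonneg hr' (negPart_nonneg f)) (smul_nonneg hr' (posPart_nonneg f)),
        hsmul _ _ hr' (negPart_nonneg f), hsmul _ _ hr' (posPart_nonneg f), ← smul_sub, neg_smul,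
        ← smul_neg, neg_sub]

theorem LinearMap.extendOfNonneg_apply_of_nonneg {φ : V → W} {hadd hsmul} {f : V} (hf : 0 ≤ f) :
    LinearMap.extendOfNonneg φ hadd hsmul f = φ f := by
  have hφ0 : φ 0 = 0 := by simpa using hadd 0 0 le_rfl le_rfl
  simp [LinearMap.extendOfNonneg, posPart_eq_self.2 hf, negPart_eq_zero.2 hf, hφ0]

end PositiveExtension

section BandProjection

variable {V : Type*} [AddCommGroup V] [Lattice V] [Module ℝ V]

/-- For `u, f ≥ 0`, the component `sup_n (f ⊓ n • u)` of `f` in the band generated by `u`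
(a junk value when the supremum does not exist). -/
noncomputable def bandPart (u f : V) : V :=
  Classical.epsilon (IsLUB (Set.range fun n : ℕ => f ⊓ (n : ℝ) • u))

variable (hD : DedekindCompleteIn (Set.univ : Set V))
include hD

theorem isLUB_bandPart (u f : V) : IsLUB (Set.range fun n : ℕ => f ⊓ (n : ℝ) • u) (bandPart u f) :=
  Classical.epsilon_spec <| exists_isLUB_of_dedekindCompleteIn hD (Set.range_nonempty _)
    ⟨f, Set.forall_mem_range.2 fun _ => inf_le_left⟩

theorem inf_nsmul_le_bandPart (u f : V) (n : ℕ) : f ⊓ (n : ℝ) • u ≤ bandPart u f :=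
  (isLUB_bandPart hD u f).1 ⟨n, rfl⟩

theorem bandPart_le {u f b : V} (h : ∀ n : ℕ, f ⊓ (n : ℝ) • u ≤ b) : bandPart u f ≤ b :=
  (isLUB_bandPart hD u f).2 (Set.forall_mem_range.2 h)

theorem bandPart_le_self (u f : V) : bandPart u f ≤ f :=
  bandPart_le hD fun _ => inf_le_left

theorem bandPart_nonneg (u : V) {f : V} (hf : 0 ≤ f) : 0 ≤ bandPart u f := by
  simpa [inf_eq_right.2 hf] using inf_nsmul_le_bandPart hD u f 0

theorem bandPart_eq_self {u x : V} (hxu : x ≤ u) : bandPart u x = x :=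
  (bandPart_le_self hD u x).antisymm <| by
    simpa [inf_eq_left.2 hxu] using inf_nsmul_le_bandPart hD u x 1

theorem bandPart_bandPart (u f : V) : bandPart u (bandPart u f) = bandPart u f :=
  (bandPart_le_self hD u _).antisymm <| bandPart_le hD fun n =>
    (le_inf (inf_nsmul_le_bandPart hD u f n) inf_le_right).trans (inf_nsmul_le_bandPart hD u _ n)

variable [AddLeftMono V] [PosSMulMono ℝ V]

theorem inf_smul_le_bandPart {u : V} (hu : 0 ≤ u) (f : V) (c : ℝ) :
    f ⊓ c • u ≤ bandPart u f := by
  obtain ⟨n, hn⟩ := exists_nat_ge c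
  exact (inf_le_inf_left f (smul_le_smul_of_nonneg_right' hn hu)).trans
    (inf_nsmul_le_bandPart hD u f n)

theorem bandPart_eq_zero {u x : V} (hu : 0 ≤ u) (hx : 0 ≤ x) (hxu : x ⊓ u = 0) :
    bandPart u x = 0 := by
  refine (bandPart_le hD fun n => ?_).antisymm (bandPart_nonneg hD u hx)
  have hn : (1 : ℝ) ≤ n + 1 := by simp
  calc x ⊓ (n : ℝ) • u ≤ ((n : ℝ) + 1) • x ⊓ ((n : ℝ) + 1) • u :=
        inf_le_inf ((one_smul ℝ x).symm.trans_le (smul_le_smul_of_nonneg_right' hn hx))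
          (smul_le_smul_of_nonneg_right' (by simp) hu)
    _ = 0 := by rw [← smul_inf_of_nonneg (by positivity), hxu, smul_zero]

theorem bandPart_add {u f g : V} (hu : 0 ≤ u) (hf : 0 ≤ f) (hg : 0 ≤ g) :
    bandPart u (f + g) = bandPart u f + bandPart u g := by
  refine le_antisymm (bandPart_le hD fun n => ?_) ?_
  · exact (inf_add_le_inf_add_inf hf hg (smul_nonneg n.cast_nonneg hu)).trans
      (add_le_add (inf_nsmul_le_bandPart hD u f n) (inf_nsmul_le_bandPart hD u g n))
  · have key : ∀ n k : ℕ, f ⊓ (n : ℝ) • u + g ⊓ (k : ℝ) • u ≤ bandPart u (f + g) := fun n k =>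
      (le_inf (add_le_add inf_le_left inf_le_left)
        ((add_le_add inf_le_right inf_le_right).trans_eq (add_smul _ _ u).symm)).trans
        (inf_smul_le_bandPart hD hu (f + g) _)
    rw [← le_sub_iff_add_le]
    refine bandPart_le hD fun n => ?_
    rw [le_sub_comm]
    exact bandPart_le hD fun k => le_sub_iff_add_le'.2 (key n k)

theorem bandPart_smul {u : V} (hu : 0 ≤ u) {r : ℝ} (hr : 0 ≤ r) (f : V) :
    bandPart u (r • f) = r • bandPart u f := by
  rcases hr.eq_or_lt with rfl | hr
  · simpa using bandPart_eq_zero hD hu le_rfl (inf_eq_left.2 hu)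
  refine le_antisymm (bandPart_le hD fun n => ?_) ?_
  · have h : r • (f ⊓ (r⁻¹ * n) • u) = (r • f) ⊓ (n : ℝ) • u := by
      rw [smul_inf_of_nonneg hr.le, smul_smul, mul_inv_cancel_left₀ hr.ne']
    exact h ▸ smul_le_smul_of_nonneg_left (inf_smul_le_bandPart hD hu f _) hr.le
  · rw [← le_inv_smul_iff_of_pos hr]
    refine bandPart_le hD fun n => ?_
    rw [le_inv_smul_iff_of_pos hr, smul_inf_of_nonneg hr.le, smul_smul]
    exact inf_smul_le_bandPart hD hu (r • f) _

noncomputable def bandProj {u : V} (hu : 0 ≤ u) : V →ₗ[ℝ] V :=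
  LinearMap.extendOfNonneg (bandPart u) (fun _ _ hf hg => bandPart_add hD hu hf hg)
    (fun _ f hr _ => bandPart_smul hD hu hr f)

theorem bandProj_apply_of_nonneg {u f : V} (hu : 0 ≤ u) (hf : 0 ≤ f) :
    bandProj hD hu f = bandPart u f :=
  LinearMap.extendOfNonneg_apply_of_nonneg hf

theorem isBandProjection_bandProj {u : V} (hu : 0 ≤ u) : IsBandProjection (bandProj hD hu) := by
  refine ⟨fun f => ?_, fun f hf => ?_⟩
  · change bandProj hD hu (bandPart u f⁺ - bandPart u f⁻) = bandPart u f⁺ - bandPart u f⁻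
    rw [map_sub, bandProj_apply_of_nonneg hD hu (bandPart_nonneg hD u (posPart_nonneg f)),
      bandProj_apply_of_nonneg hD hu (bandPart_nonneg hD u (negPart_nonneg f)),
      bandPart_bandPart hD, bandPart_bandPart hD]
  · rw [bandProj_apply_of_nonneg hD hu hf]
    exact ⟨bandPart_nonneg hD u hf, bandPart_le_self hD u f⟩

theorem bandProj_posPart_apply (h : V) : bandProj hD (posPart_nonneg h) h = h⁺ := by
  change bandPart h⁺ h⁺ - bandPart h⁺ h⁻ = h⁺
  rw [bandPart_eq_self hD le_rfl, bandPart_eq_zero hD (posPart_nonneg h) (negPart_nonneg h)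
    (by rw [inf_comm]; exact posPart_inf_negPart_eq_zero h), sub_zero]

end BandProjection

section Freudenthal

variable {V : Type*} [AddCommGroup V] [Lattice V] [Module ℝ V]

def componentSpan (e : V) : Submodule ℝ V :=
  Submodule.span ℝ {x | ∃ P : V →ₗ[ℝ] V, IsBandProjection P ∧ P e = x}

variable [AddLeftMono V]

theorem IsBandProjection.apply_le_posPart {P : V →ₗ[ℝ] V} (hP : IsBandProjection P) (h : V) :
    P h ≤ h⁺ :=
  calc P h = P h⁺ - P h⁻ := by rw [← map_sub, posPart_sub_negPart]
    _ ≤ P h⁺ := sub_le_self _ (hP.2 _ (negPart_nonneg h)).1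
    _ ≤ h⁺ := (hP.2 _ (posPart_nonneg h)).2

theorem IsBandProjection.apply_mem_idealE {P : V →ₗ[ℝ] V} (hP : IsBandProjection P) {e : V}
    (he : 0 ≤ e) : P e ∈ idealE e :=
  ⟨1, zero_le_one, by rw [one_smul, abs_of_nonneg (hP.2 e he).1]; exact (hP.2 e he).2⟩

theorem sub_sub_sum_range_smul_mem_Icc {a b : ℕ → V} {ε : ℝ} (M : ℕ)
    (h : ∀ i j : ℕ, a j - ((i : ℝ) * ε) • b j ≤ a i - ((i : ℝ) * ε) • b i) :
    a 0 - a M - ∑ i ∈ range M, ((i : ℝ) * ε) • (b i - b (i + 1)) ∈ Set.Icc 0 (ε • (b 0 - b M)) := by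
  rw [← Finset.sum_range_sub' a, ← Finset.sum_range_sub' b, Finset.smul_sum,
    ← Finset.sum_sub_distrib]
  refine ⟨Finset.sum_nonneg fun i _ => ?_, Finset.sum_le_sum fun i _ => ?_⟩
  · have := sub_nonneg.2 (h i (i + 1))
    convert this using 1
    module
  · have := sub_nonneg.2 (h (i + 1) i)
    rw [← sub_nonneg]
    convert this using 1
    push_cast
    module

variable [PosSMulMono ℝ V]

theorem exists_mem_componentSpan_abs_sub_le_of_nonneg (hD : DedekindCompleteIn (Set.univ : Set V))
    {e f : V} (he : 0 ≤ e) (hf : 0 ≤ f) {k : ℝ} (hfk : f ≤ k • e) {ε : ℝ} (hε : 0 < ε) :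
    ∃ s ∈ componentSpan e, |f - s| ≤ ε • e := by
  obtain ⟨M, hM⟩ := exists_nat_ge (k / ε)
  let Q : ℕ → V →ₗ[ℝ] V := fun i => bandProj hD (posPart_nonneg (f - ((i : ℝ) * ε) • e))
  have hQ : ∀ i, IsBandProjection (Q i) := fun i => isBandProjection_bandProj hD _
  have hmax : ∀ i j : ℕ, Q j f - ((i : ℝ) * ε) • Q j e ≤ Q i f - ((i : ℝ) * ε) • Q i e := by
    intro i j
    rw [← map_smul, ← map_sub, ← map_smul, ← map_sub, bandProj_posPart_apply hD]
    exact (hQ j).apply_le_posPart _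
  have hQ0 : Q 0 f = f := by
    have h : Q 0 (f - (((0 : ℕ) : ℝ) * ε) • e) = (f - (((0 : ℕ) : ℝ) * ε) • e)⁺ :=
      bandProj_posPart_apply hD _
    simpa [posPart_eq_self.2 hf] using h
  have hQM : Q M f = 0 := by
    have hfM : f ≤ ((M : ℝ) * ε) • e :=
      hfk.trans (smul_le_smul_of_nonneg_right' ((div_le_iff₀ hε).1 hM) he)
    rw [bandProj_apply_of_nonneg hD _ hf]
    refine bandPart_eq_zero hD (posPart_nonneg _) hf ?_
    rw [posPart_eq_zero.2 (sub_nonpos.2 hfM), inf_eq_right.2 hf]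
  obtain ⟨hlow, hup⟩ :=
    sub_sub_sum_range_smul_mem_Icc (a := fun i => Q i f) (b := fun i => Q i e) M hmax
  simp only [hQ0, hQM, sub_zero] at hlow hup
  refine ⟨∑ i ∈ range M, ((i : ℝ) * ε) • (Q i e - Q (i + 1) e),
    Submodule.sum_mem _ fun i _ => Submodule.smul_mem _ _ <| Submodule.sub_mem _
      (Submodule.subset_span ⟨_, hQ i, rfl⟩) (Submodule.subset_span ⟨_, hQ (i + 1), rfl⟩), ?_⟩
  rw [abs_of_nonneg hlow]
  exact hup.trans <| smul_le_smul_of_nonneg_left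
    ((sub_le_self _ ((hQ M).2 e he).1).trans ((hQ 0).2 e he).2) hε.le

theorem exists_mem_componentSpan_abs_sub_le (hD : DedekindCompleteIn (Set.univ : Set V))
    {e f : V} (he : 0 ≤ e) (hf : f ∈ idealE e) {ε : ℝ} (hε : 0 < ε) :
    ∃ s ∈ componentSpan e, |f - s| ≤ ε • e := by
  obtain ⟨k, -, hk⟩ := hf
  obtain ⟨s₁, hs₁, h₁⟩ := exists_mem_componentSpan_abs_sub_le_of_nonneg hD he (posPart_nonneg f)
    ((posPart_le_abs f).trans hk) (half_pos hε)
  obtain ⟨s₂, hs₂, h₂⟩ := exists_mem_componentSpan_abs_sub_le_of_nonneg hD he (negPart_nonneg f)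
    ((negPart_le_abs f).trans hk) (half_pos hε)
  refine ⟨s₁ - s₂, Submodule.sub_mem _ hs₁ hs₂, ?_⟩
  calc |f - (s₁ - s₂)| = |(f⁺ - s₁) - (f⁻ - s₂)| := by rw [sub_sub_sub_comm, posPart_sub_negPart]
    _ ≤ |f⁺ - s₁| + |f⁻ - s₂| := abs_sub_le_abs_add_abs _ _
    _ ≤ (ε / 2) • e + (ε / 2) • e := add_le_add h₁ h₂
    _ = ε • e := by rw [← add_smul, add_halves]

end Freudenthal

section OrderConvergence

variable {V : Type*} [AddCommGroup V] [Lattice V]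

theorem OrderConv.of_abs_le {u v : ℕ → V} (hv : OrderConv v 0) (h : ∀ n, |u n| ≤ v n) :
    OrderConv u 0 := by
  obtain ⟨p, hpa, hpg, hvp⟩ := hv
  refine ⟨p, hpa, hpg, fun n => ?_⟩
  simp only [sub_zero] at hvp ⊢
  exact (h n).trans ((le_abs_self _).trans (hvp n))

variable [AddLeftMono V]

theorem OrderConv.zero : OrderConv (0 : ℕ → V) 0 :=
  ⟨0, antitone_const, by simp [isGLB_singleton], fun n => by simp⟩

theorem isGLB_range_add {p q : ℕ → V} (hpa : Antitone p) (hp : IsGLB (Set.range p) 0)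
    (hqa : Antitone q) (hq : IsGLB (Set.range q) 0) : IsGLB (Set.range (p + q)) 0 := by
  refine ⟨Set.forall_mem_range.2 fun n => add_nonneg (hp.1 ⟨n, rfl⟩) (hq.1 ⟨n, rfl⟩),
    fun b hb => hp.2 <| Set.forall_mem_range.2 fun n => sub_nonpos.1 <| hq.2 <|
      Set.forall_mem_range.2 fun m => ?_⟩
  rw [sub_le_iff_le_add']
  exact (hb ⟨max n m, rfl⟩).trans (add_le_add (hpa (le_max_left n m)) (hqa (le_max_right n m)))

theorem OrderConv.add {u v : ℕ → V} (hu : OrderConv u 0) (hv : OrderConv v 0) :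
    OrderConv (u + v) 0 := by
  obtain ⟨p, hpa, hpg, hup⟩ := hu
  obtain ⟨q, hqa, hqg, hvq⟩ := hv
  refine ⟨p + q, hpa.add hqa, isGLB_range_add hpa hpg hqa hqg, fun n => ?_⟩
  simp only [sub_zero, Pi.add_apply] at hup hvq ⊢
  exact (abs_add_le _ _).trans (add_le_add (hup n) (hvq n))

theorem OrderConv.of_le_add {u c : ℕ → V} {p : ℕ → ℕ → V} (hu : ∀ n, 0 ≤ u n)
    (hc : IsGLB (Set.range c) 0) (hpa : ∀ j, Antitone (p j)) (hpg : ∀ j, IsGLB (Set.range (p j)) 0)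
    (hup : ∀ j n, u n ≤ p j n + c j) : OrderConv u 0 := by
  let q : ℕ → V := fun n => (range (n + 1)).inf' nonempty_range_add_one fun j => p j n + c j
  have hq : ∀ {j n}, j ≤ n → q n ≤ p j n + c j := fun h =>
    inf'_le _ (mem_range.2 (Nat.lt_succ_of_le h))
  refine ⟨q, fun a b hab => ?_, ⟨?_, fun b hb => hc.2 fun _ ⟨j, hj⟩ => hj ▸ ?_⟩, fun n => ?_⟩
  · exact le_inf' _ _ fun j hj => (hq ((Nat.lt_succ_iff.1 (mem_range.1 hj)).trans hab)).trans
      (add_le_add_left (hpa j hab) _)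
  · exact Set.forall_mem_range.2 fun n => le_inf' _ _ fun j _ =>
      add_nonneg ((hpg j).1 ⟨n, rfl⟩) (hc.1 ⟨j, rfl⟩)
  · refine sub_nonpos.1 <| (hpg j).2 <| Set.forall_mem_range.2 fun n => ?_
    rw [sub_le_iff_le_add]
    exact (hb ⟨max n j, rfl⟩).trans <| (hq (le_max_right n j)).trans
      (add_le_add_left (hpa j (le_max_left n j)) _)
  · rw [sub_zero, abs_of_nonneg (hu n)]
    exact le_inf' _ _ fun j _ => hup j n

variable [Module ℝ V] [PosSMulMono ℝ V]

theorem OrderConv.smul {u : ℕ → V} (hu : OrderConv u 0) (r : ℝ) : OrderConv (r • u) 0 := by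
  rcases eq_or_ne r 0 with rfl | hr
  · simpa using OrderConv.zero
  obtain ⟨p, hpa, hpg, hup⟩ := hu
  have hr' : 0 < |r| := abs_pos.2 hr
  refine ⟨|r| • p, fun a b h => smul_le_smul_of_nonneg_left (hpa h) hr'.le, ?_, fun n => ?_⟩
  · have := (OrderIso.smulRight hr').isGLB_image'.2 hpg
    rwa [← Set.range_comp, OrderIso.smulRight_apply, smul_zero] at this
  · simp only [sub_zero, Pi.smul_apply] at hup ⊢
    rw [abs_real_smul]
    exact smul_le_smul_of_nonneg_left (hup n) hr'.le

theorem OrderConv.of_forall_le_add_smul (hD : DedekindCompleteIn (Set.univ : Set V)) {e : V}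
    (he : 0 ≤ e) {u : ℕ → V} (hu : ∀ n, 0 ≤ u n)
    (H : ∀ ε : ℝ, 0 < ε → ∃ v, OrderConv v 0 ∧ ∀ n, u n ≤ v n + ε • e) : OrderConv u 0 := by
  have : ∀ j : ℕ, ∃ p : ℕ → V, Antitone p ∧ IsGLB (Set.range p) 0 ∧
      ∀ n, u n ≤ p n + ((j : ℝ) + 1)⁻¹ • e := by
    intro j
    obtain ⟨v, ⟨p, hpa, hpg, hvp⟩, huv⟩ := H _ (by positivity : (0 : ℝ) < ((j : ℝ) + 1)⁻¹)
    refine ⟨p, hpa, hpg, fun n => (huv n).trans (add_le_add_left ?_ _)⟩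
    simpa using (le_abs_self _).trans (hvp n)
  choose p hpa hpg hup using this
  exact OrderConv.of_le_add hu (isGLB_range_inv_succ_smul hD he) hpa hpg hup

end OrderConvergence

section Cesaro

variable {V : Type*} [AddCommGroup V] [Lattice V] [Module ℝ V] [PosSMulMono ℝ V]

noncomputable def cesAbs (a : ℕ → V) (n : ℕ) : V := (n : ℝ)⁻¹ • ∑ k ∈ range n, |a k|

theorem cesAbs_smul (r : ℝ) (a : ℕ → V) (n : ℕ) : cesAbs (r • a) n = |r| • cesAbs a n := by
  simp only [cesAbs, Pi.smul_apply, abs_real_smul, ← smul_sum, smul_comm |r|]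

variable [AddLeftMono V]

theorem cesAbs_nonneg (a : ℕ → V) (n : ℕ) : 0 ≤ cesAbs a n :=
  smul_nonneg (by positivity) (sum_nonneg fun _ _ => abs_nonneg _)

theorem cesAbs_add_le (a b : ℕ → V) (n : ℕ) : cesAbs (a + b) n ≤ cesAbs a n + cesAbs b n := by
  rw [cesAbs, cesAbs, cesAbs, ← smul_add, ← sum_add_distrib]
  exact smul_le_smul_of_nonneg_left (sum_le_sum fun _ _ => abs_add_le _ _) (by positivity)

theorem cesAbs_le_add {a b : ℕ → V} {c : V} (hc : 0 ≤ c) (h : ∀ k, |a k| ≤ |b k| + c) (n : ℕ) :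
    cesAbs a n ≤ cesAbs b n + c := by
  have hn : (n : ℝ)⁻¹ * n ≤ 1 := by
    rcases n.eq_zero_or_pos with rfl | hn
    · simp
    · rw [inv_mul_cancel₀ (by positivity)]
  calc cesAbs a n ≤ (n : ℝ)⁻¹ • ∑ k ∈ range n, (|b k| + c) :=
        smul_le_smul_of_nonneg_left (sum_le_sum fun k _ => h k) (by positivity)
    _ = cesAbs b n + ((n : ℝ)⁻¹ * n) • c := by
        rw [sum_add_distrib, smul_add, sum_const, card_range, ← Nat.cast_smul_eq_nsmul ℝ,
          smul_smul, cesAbs]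
    _ ≤ cesAbs b n + c :=
        add_le_add_right ((smul_le_smul_of_nonneg_right' hn hc).trans_eq (one_smul ℝ c)) _

variable (V) in
noncomputable def cesaroNull : Submodule ℝ (ℕ → V) where
  carrier := {a | OrderConv (cesAbs a) 0}
  add_mem' {a b} ha hb := (OrderConv.add ha hb).of_abs_le fun n => by
    rw [abs_of_nonneg (cesAbs_nonneg _ _)]
    exact cesAbs_add_le a b n
  zero_mem' := OrderConv.zero.of_abs_le fun n => by
    simp [cesAbs]
  smul_mem' r a ha := (ha.smul |r|).of_abs_le fun n => by
    rw [abs_of_nonneg (cesAbs_nonneg _ _), cesAbs_smul]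
    rfl

theorem mem_cesaroNull_of_forall_abs_sub_le (hD : DedekindCompleteIn (Set.univ : Set V)) {e : V}
    (he : 0 ≤ e) {a : ℕ → V}
    (H : ∀ ε : ℝ, 0 < ε → ∃ b ∈ cesaroNull V, ∀ k, |a k - b k| ≤ ε • e) : a ∈ cesaroNull V := by
  refine OrderConv.of_forall_le_add_smul hD he (cesAbs_nonneg a) fun ε hε => ?_
  obtain ⟨b, hb, hab⟩ := H ε hε
  refine ⟨cesAbs b, hb, cesAbs_le_add (smul_nonneg hε.le he) fun k => ?_⟩
  calc |a k| = |b k + (a k - b k)| := by rw [add_sub_cancel]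
    _ ≤ |b k| + ε • e := (abs_add_le _ _).trans (add_le_add_right (hab k) _)

end Cesaro

section PrincipalIdeal

variable {V : Type*} [AddCommGroup V] [Lattice V] [Module ℝ V]

theorem mem_idealE_of_abs_le_abs {e x y : V} (hxy : |x| ≤ |y|) (hy : y ∈ idealE e) :
    x ∈ idealE e :=
  let ⟨k, hk, hyk⟩ := hy
  ⟨k, hk, hxy.trans hyk⟩

/-- `L` does not increase the order-unit norm `‖x‖_e = inf {c | |x| ≤ c • e}`. -/
def PreservesUnitBounds (e : V) (L : V → V) : Prop := ∀ (x : V) (c : ℝ), |x| ≤ c • e → |L x| ≤ c • e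

theorem PreservesUnitBounds.mapsTo {e : V} {L : V → V} (hL : PreservesUnitBounds e L) :
    Set.MapsTo L (idealE e) (idealE e) :=
  fun x ⟨k, hk, hxk⟩ => ⟨k, hk, hL x k hxk⟩

theorem pow_apply_nonneg {S : V →ₗ[ℝ] V} (hS : ∀ x, 0 ≤ x → 0 ≤ S x) (k : ℕ) {x : V}
    (hx : 0 ≤ x) : 0 ≤ (S ^ k) x := by
  rw [Module.End.pow_apply]
  induction k with
  | zero => exact hx
  | succ k ih => rw [Function.iterate_succ_apply']; exact hS _ ih

theorem IsRieszHom.map_nonneg {S : V →ₗ[ℝ] V} (hS : IsRieszHom S) {x : V} (hx : 0 ≤ x) :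
    0 ≤ S x := by
  rw [← sup_eq_left.2 hx, hS, map_zero]
  exact le_sup_right

variable [AddLeftMono V]

theorem preservesUnitBounds_of_nonneg {L : V →ₗ[ℝ] V} (hL : ∀ x, 0 ≤ x → 0 ≤ L x) {e : V}
    (hLe : L e = e) : PreservesUnitBounds e L := by
  have hmono : Monotone L := fun x y h => by simpa using hL (y - x) (sub_nonneg.2 h)
  intro x c hx
  calc |L x| ≤ L |x| := abs_le'.2 ⟨hmono (le_abs_self x), by simpa using hmono (neg_le_abs x)⟩
    _ ≤ L (c • e) := hmono hx
    _ = c • e := by rw [map_smul, hLe]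

variable [PosSMulMono ℝ V]

def idealSubmodule (e : V) : Submodule ℝ V where
  carrier := idealE e
  add_mem' := fun ⟨k, hk, hxk⟩ ⟨l, hl, hyl⟩ =>
    ⟨k + l, add_nonneg hk hl,
      (abs_add_le _ _).trans ((add_le_add hxk hyl).trans_eq (add_smul k l e).symm)⟩
  zero_mem' := ⟨0, le_rfl, by simp⟩
  smul_mem' r _ := fun ⟨k, hk, hxk⟩ =>
    ⟨|r| * k, by positivity, by
      rw [abs_real_smul, mul_smul]
      exact smul_le_smul_of_nonneg_left hxk (abs_nonneg r)⟩

theorem componentSpan_le_idealSubmodule {e : V} (he : 0 ≤ e) :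
    componentSpan e ≤ idealSubmodule e :=
  Submodule.span_le.2 fun _ ⟨_, hP, hx⟩ => hx ▸ hP.apply_mem_idealE he

end PrincipalIdeal

namespace IsFAlgMulOn

variable {V : Type*} [AddCommGroup V] [Lattice V] [Module ℝ V] {e : V} {m : V → V → V}
  {f f' g g' : V}

theorem add_left (hm : IsFAlgMulOn e m) (hf : f ∈ idealE e) (hf' : f' ∈ idealE e)
    (hg : g ∈ idealE e) : m (f + f') g = m f g + m f' g :=
  hm.2.2.1 f hf f' hf' g hg

theorem smul_left (hm : IsFAlgMulOn e m) (r : ℝ) (hf : f ∈ idealE e) (hg : g ∈ idealE e) :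
    m (r • f) g = r • m f g :=
  hm.2.2.2.1 r f hf g hg

theorem comm (hm : IsFAlgMulOn e m) (hf : f ∈ idealE e) (hg : g ∈ idealE e) : m f g = m g f :=
  hm.2.1 f hf g hg

theorem nonneg (hm : IsFAlgMulOn e m) (hf : f ∈ idealE e) (hg : g ∈ idealE e) (hf0 : 0 ≤ f)
    (hg0 : 0 ≤ g) : 0 ≤ m f g :=
  hm.2.2.2.2.1 f hf g hg hf0 hg0

theorem unit_left (hm : IsFAlgMulOn e m) (hf : f ∈ idealE e) : m e f = f :=
  hm.2.2.2.2.2.1 f hf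

variable [AddLeftMono V] [PosSMulMono ℝ V]

theorem add_right (hm : IsFAlgMulOn e m) (hf : f ∈ idealE e) (hg : g ∈ idealE e)
    (hg' : g' ∈ idealE e) : m f (g + g') = m f g + m f g' := by
  rw [hm.comm hf ((idealSubmodule e).add_mem hg hg'), hm.add_left hg hg' hf, hm.comm hg hf,
    hm.comm hg' hf]

theorem smul_right (hm : IsFAlgMulOn e m) (r : ℝ) (hf : f ∈ idealE e) (hg : g ∈ idealE e) :
    m f (r • g) = r • m f g := by
  rw [hm.comm hf ((idealSubmodule e).smul_mem r hg), hm.smul_left r hg hf, hm.comm hg hf]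

theorem sub_left (hm : IsFAlgMulOn e m) (hf : f ∈ idealE e) (hf' : f' ∈ idealE e)
    (hg : g ∈ idealE e) : m (f - f') g = m f g - m f' g := by
  rw [sub_eq_add_neg, ← neg_one_smul ℝ f', hm.add_left hf ((idealSubmodule e).smul_mem _ hf') hg,
    hm.smul_left _ hf' hg, neg_one_smul, sub_eq_add_neg]

theorem sub_right (hm : IsFAlgMulOn e m) (hf : f ∈ idealE e) (hg : g ∈ idealE e)
    (hg' : g' ∈ idealE e) : m f (g - g') = m f g - m f g' := by
  rw [hm.comm hf ((idealSubmodule e).sub_mem hg hg'), hm.sub_left hg hg' hf, hm.comm hg hf,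
    hm.comm hg' hf]

theorem abs_le_smul (hm : IsFAlgMulOn e m) (he : 0 ≤ e) {a b : V} (ha : a ∈ idealE e)
    (hb : b ∈ idealE e) {α β : ℝ} (hβ : 0 ≤ β) (haα : |a| ≤ α • e) (hbβ : |b| ≤ β • e) :
    |m a b| ≤ (α * β) • e := by
  have heE : e ∈ idealE e := ⟨1, zero_le_one, by rw [one_smul, abs_of_nonneg he]⟩
  have hβe : β • e ∈ idealE e := (idealSubmodule e).smul_mem β heE
  have hc : ∀ c ∈ idealE e, 0 ≤ c → |m c b| ≤ β • c := by
    intro c hc hc0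
    have hmono : ∀ {x}, x ∈ idealE e → x ≤ β • e → m c x ≤ β • c := fun hx hxβ => by
      have := hm.nonneg hc ((idealSubmodule e).sub_mem hβe hx) hc0 (sub_nonneg.2 hxβ)
      rwa [hm.sub_right hc hβe hx, hm.smul_right β hc heE, hm.comm hc heE, hm.unit_left hc,
        sub_nonneg] at this
    refine abs_le'.2 ⟨hmono hb (abs_le'.1 hbβ).1, ?_⟩
    have := hmono ((idealSubmodule e).neg_mem hb) (abs_le'.1 hbβ).2
    rwa [← neg_one_smul ℝ b, hm.smul_right _ hc hb, neg_one_smul] at this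
  have hpos : a⁺ ∈ idealE e :=
    mem_idealE_of_abs_le_abs (by rw [abs_of_nonneg (posPart_nonneg a)]; exact posPart_le_abs a) ha
  have hneg : a⁻ ∈ idealE e :=
    mem_idealE_of_abs_le_abs (by rw [abs_of_nonneg (negPart_nonneg a)]; exact negPart_le_abs a) ha
  calc |m a b| = |m a⁺ b - m a⁻ b| := by rw [← hm.sub_left hpos hneg hb, posPart_sub_negPart]
    _ ≤ |m a⁺ b| + |m a⁻ b| := abs_sub_le_abs_add_abs _ _
    _ ≤ β • a⁺ + β • a⁻ :=
        add_le_add (hc _ hpos (posPart_nonneg a)) (hc _ hneg (negPart_nonneg a))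
    _ = β • |a| := by rw [← smul_add, posPart_add_negPart]
    _ ≤ β • α • e := smul_le_smul_of_nonneg_left haα hβ
    _ = (α * β) • e := by rw [smul_smul, mul_comm]

theorem abs_sub_le (hm : IsFAlgMulOn e m) (he : 0 ≤ e) {a a' b b' : V} (ha : a ∈ idealE e)
    (ha' : a' ∈ idealE e) (hb : b ∈ idealE e) (hb' : b' ∈ idealE e) {α β δ : ℝ} (hβ : 0 ≤ β)
    (hδ : 0 ≤ δ) (haa' : |a - a'| ≤ δ • e) (hbb' : |b - b'| ≤ δ • e) (ha'α : |a'| ≤ α • e)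
    (hbβ : |b| ≤ β • e) : |m a b - m a' b'| ≤ (δ * (α + β)) • e := by
  have hsplit : m a b - m a' b' = m (a - a') b + m a' (b - b') := by
    rw [hm.sub_left ha ha' hb, hm.sub_right ha' hb hb']
    abel
  calc |m a b - m a' b'| ≤ |m (a - a') b| + |m a' (b - b')| := hsplit ▸ abs_add_le _ _
    _ ≤ (δ * β) • e + (α * δ) • e :=
        add_le_add (hm.abs_le_smul he ((idealSubmodule e).sub_mem ha ha') hb hβ haa' hbβ)
          (hm.abs_le_smul he ha' ((idealSubmodule e).sub_mem hb hb') hδ ha'α hbb')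
    _ = (δ * (α + β)) • e := by rw [← add_smul]; ring_nf

end IsFAlgMulOn

section Defect

variable {V : Type*} [AddCommGroup V] [Lattice V] [Module ℝ V]

def defect (T S : V →ₗ[ℝ] V) (m : V → V → V) (f g : V) (k : ℕ) : V :=
  T (m ((S ^ k) f) g) - m (T f) (T g)

variable {T S : V →ₗ[ℝ] V} {m : V → V → V} {e x x' y y' : V}

section Bilinear

variable (hm : IsFAlgMulOn e m) (hT : Set.MapsTo T (idealE e) (idealE e))
  (hS : ∀ k, Set.MapsTo ⇑(S ^ k) (idealE e) (idealE e))
include hm hT hS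

theorem defect_add_left (hx : x ∈ idealE e) (hx' : x' ∈ idealE e) (hy : y ∈ idealE e) :
    defect T S m (x + x') y = defect T S m x y + defect T S m x' y := by
  ext k
  simp only [defect, Pi.add_apply, map_add]
  rw [hm.add_left (hS k hx) (hS k hx') hy, hm.add_left (hT hx) (hT hx') (hT hy), map_add]
  abel

theorem defect_smul_left (r : ℝ) (hx : x ∈ idealE e) (hy : y ∈ idealE e) :
    defect T S m (r • x) y = r • defect T S m x y := by
  ext k
  simp only [defect, Pi.smul_apply, map_smul]
  rw [hm.smul_left r (hS k hx) hy, hm.smul_left r (hT hx) (hT hy), map_smul, smul_sub]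

theorem defect_zero_left (hy : y ∈ idealE e) : defect T S m 0 y = 0 := by
  simpa using defect_smul_left hm hT hS 0 hy hy

variable [AddLeftMono V] [PosSMulMono ℝ V]

theorem defect_add_right (hx : x ∈ idealE e) (hy : y ∈ idealE e) (hy' : y' ∈ idealE e) :
    defect T S m x (y + y') = defect T S m x y + defect T S m x y' := by
  ext k
  simp only [defect, Pi.add_apply, map_add]
  rw [hm.add_right (hS k hx) hy hy', hm.add_right (hT hx) (hT hy) (hT hy'), map_add]
  abel

theorem defect_smul_right (r : ℝ) (hx : x ∈ idealE e) (hy : y ∈ idealE e) :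
    defect T S m x (r • y) = r • defect T S m x y := by
  ext k
  simp only [defect, Pi.smul_apply, map_smul]
  rw [hm.smul_right r (hS k hx) hy, hm.smul_right r (hT hx) (hT hy), map_smul, smul_sub]

theorem defect_zero_right (hx : x ∈ idealE e) : defect T S m x 0 = 0 := by
  simpa using defect_smul_right hm hT hS 0 hx hx

theorem defect_mem_cesaroNull_of_mem_componentSpan (he : 0 ≤ e)
    (H : ∀ P Q : V →ₗ[ℝ] V, IsBandProjection P → IsBandProjection Q →
      defect T S m (P e) (Q e) ∈ cesaroNull V)
    (hx : x ∈ componentSpan e) (hy : y ∈ componentSpan e) : defect T S m x y ∈ cesaroNull V := by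
  have hE : ∀ {z}, z ∈ componentSpan e → z ∈ idealE e := fun hz =>
    componentSpan_le_idealSubmodule he hz
  have hxQ : ∀ Q : V →ₗ[ℝ] V, IsBandProjection Q → defect T S m x (Q e) ∈ cesaroNull V := by
    intro Q hQ
    induction hx using Submodule.span_induction with
    | mem x hx =>
      obtain ⟨P, hP, rfl⟩ := hx
      exact H P Q hP hQ
    | zero =>
      rw [defect_zero_left hm hT hS (hQ.apply_mem_idealE he)]
      exact zero_mem _
    | add x x' hx hx' ihx ihx' =>
      rw [defect_add_left hm hT hS (hE hx) (hE hx') (hQ.apply_mem_idealE he)]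
      exact add_mem ihx ihx'
    | smul r x hx ih =>
      rw [defect_smul_left hm hT hS r (hE hx) (hQ.apply_mem_idealE he)]
      exact Submodule.smul_mem _ r ih
  induction hy using Submodule.span_induction with
  | mem y hy =>
    obtain ⟨Q, hQ, rfl⟩ := hy
    exact hxQ Q hQ
  | zero =>
    rw [defect_zero_right hm hT hS (hE hx)]
    exact zero_mem _
  | add y y' hy hy' ihy ihy' =>
    rw [defect_add_right hm hT hS (hE hx) (hE hy) (hE hy')]
    exact add_mem ihy ihy'
  | smul r y hy ih =>
    rw [defect_smul_right hm hT hS r (hE hx) (hE hy)]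
    exact Submodule.smul_mem _ r ih

end Bilinear

variable [AddLeftMono V] [PosSMulMono ℝ V]

theorem abs_defect_sub_defect_le (hm : IsFAlgMulOn e m) (he : 0 ≤ e) (hT : PreservesUnitBounds e T)
    (hS : ∀ k, PreservesUnitBounds e ⇑(S ^ k)) {f g : V} (hf : f ∈ idealE e) (hg : g ∈ idealE e)
    (hx : x ∈ idealE e) (hy : y ∈ idealE e) {α β δ : ℝ} (hβ : 0 ≤ β) (hδ : 0 ≤ δ)
    (hfx : |f - x| ≤ δ • e) (hgy : |g - y| ≤ δ • e) (hxα : |x| ≤ α • e) (hgβ : |g| ≤ β • e)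
    (k : ℕ) : |defect T S m f g k - defect T S m x y k| ≤ (2 * (δ * (α + β))) • e := by
  have hsplit : defect T S m f g k - defect T S m x y k =
      T (m ((S ^ k) f) g - m ((S ^ k) x) y) - (m (T f) (T g) - m (T x) (T y)) := by
    simp only [defect, map_sub]
    abel
  rw [hsplit, two_mul, add_smul]
  refine (abs_sub_le_abs_add_abs _ _).trans (add_le_add (hT _ _ ?_) ?_)
  · refine hm.abs_sub_le he ((hS k).mapsTo hf) ((hS k).mapsTo hx) hg hy hβ hδ ?_ hgy
      (hS k _ _ hxα) hgβ
    rw [← map_sub]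
    exact hS k _ _ hfx
  · refine hm.abs_sub_le he (hT.mapsTo hf) (hT.mapsTo hx) (hT.mapsTo hg) (hT.mapsTo hy) hβ hδ ?_ ?_
      (hT _ _ hxα) (hT _ _ hgβ) <;> rw [← map_sub]
    exacts [hT _ _ hfx, hT _ _ hgy]

theorem exists_mem_componentSpan_abs_defect_sub_le (hD : DedekindCompleteIn (Set.univ : Set V))
    (he : 0 ≤ e) (hm : IsFAlgMulOn e m) (hT : PreservesUnitBounds e T)
    (hS : ∀ k, PreservesUnitBounds e ⇑(S ^ k)) {f g : V} (hf : f ∈ idealE e) (hg : g ∈ idealE e)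
    {ε : ℝ} (hε : 0 < ε) :
    ∃ x ∈ componentSpan e, ∃ y ∈ componentSpan e,
      ∀ k, |defect T S m f g k - defect T S m x y k| ≤ ε • e := by
  obtain ⟨α, hα, hfα⟩ := id hf
  obtain ⟨β, hβ, hgβ⟩ := id hg
  set δ := min 1 (ε / (2 * (α + 1 + β)))
  have hδ : 0 < δ := lt_min one_pos (by positivity)
  obtain ⟨x, hx, hfx⟩ := exists_mem_componentSpan_abs_sub_le hD he hf hδ
  obtain ⟨y, hy, hgy⟩ := exists_mem_componentSpan_abs_sub_le hD he hg hδ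
  have hxα : |x| ≤ (α + 1) • e :=
    calc |x| = |f - (f - x)| := by rw [sub_sub_cancel]
      _ ≤ |f| + |f - x| := abs_sub_le_abs_add_abs _ _
      _ ≤ α • e + (1 : ℝ) • e :=
          add_le_add hfα (hfx.trans (smul_le_smul_of_nonneg_right' (min_le_left _ _) he))
      _ = (α + 1) • e := (add_smul _ _ _).symm
  refine ⟨x, hx, y, hy, fun k => (abs_defect_sub_defect_le hm he hT hS hf hg
    (componentSpan_le_idealSubmodule he hx) (componentSpan_le_idealSubmodule he hy) hβ hδ.le hfx hgy
    hxα hgβ k).trans (smul_le_smul_of_nonneg_right' ?_ he)⟩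
  calc 2 * (δ * (α + 1 + β)) ≤ 2 * (ε / (2 * (α + 1 + β)) * (α + 1 + β)) := by
        gcongr
        exact min_le_right _ _
    _ = ε := by field_simp

end Defect

/-- Conditional weak mixing for band projections is equivalent to the corresponding
statement for all `f, g ∈ E_e`. -/
theorem weakMixing_iff_ideal (T S : E →ₗ[ℝ] E) (e : E) (h : IsCEPS T S e)
    (m : E → E → E) (hm : IsFAlgMulOn e m) :
    (∀ P Q : E →ₗ[ℝ] E, IsBandProjection P → IsBandProjection Q →
        OrderConv (fun n => (n : ℝ)⁻¹ • ∑ k ∈ Finset.range n,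
          |T (m ((S ^ k) (P e)) (Q e)) - m (T (P e)) (T (Q e))|) 0) ↔
      ∀ f ∈ idealE e, ∀ g ∈ idealE e,
        OrderConv (fun n => (n : ℝ)⁻¹ • ∑ k ∈ Finset.range n,
          |T (m ((S ^ k) f) g) - m (T f) (T g)|) 0 := by
  obtain ⟨hD, ⟨he, -⟩, hCE, hTe, hS, -, hSe, -⟩ := h
  have hT : PreservesUnitBounds e T :=
    preservesUnitBounds_of_nonneg (fun x hx => hCE.2.2.2.1 x trivial hx) hTe
  have hSk : ∀ k, PreservesUnitBounds e ⇑(S ^ k) := fun k =>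
    preservesUnitBounds_of_nonneg (fun _ => pow_apply_nonneg (fun _ => hS.map_nonneg) k)
      (by rw [Module.End.pow_apply, Function.iterate_fixed hSe])
  refine ⟨fun H f hf g hg => ?_, fun H P Q hP hQ =>
    H _ (hP.apply_mem_idealE he.le) _ (hQ.apply_mem_idealE he.le)⟩
  refine mem_cesaroNull_of_forall_abs_sub_le hD he.le fun ε hε => ?_
  obtain ⟨x, hx, y, hy, hxy⟩ :=
    exists_mem_componentSpan_abs_defect_sub_le hD he.le hm hT hSk hf hg hε
  exact ⟨_, defect_mem_cesaroNull_of_mem_componentSpan hm hT.mapsTo (fun k => (hSk k).mapsTo)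
    he.le H hx hy, hxy⟩
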